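/- arXiv:1409.4686 — 2 statements merged into one kernel-verified Lean document; each statement's English description precedes it below -/
import Mathlib

section
/- Let M be a monoid containing elements S₁,…,S_{m−1} satisfying the braid relations S_iS_j = S_jS_i whenever |i−j| > 1 and S_iS_{i+1}S_i = S_{i+1}S_iS_{i+1} for 1 ≤ i ≤ m−2. Then for all indices 1 ≤ i ≤ k < l ≤ j ≤ m−1 one has the identity S_{l−1}S_{l−2}⋯S_k · S_jS_{j−1}⋯S_i = S_jS_{j−1}⋯S_i · S_lS_{l−1}⋯S_{k+1}, where all products are taken with strictly decreasing indices. -/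
/-- The product `S hi * S (hi - 1) * ⋯ * S lo` with strictly decreasing indices. -/
def descProd {M : Type*} [Monoid M] (S : ℕ → M) (hi lo : ℕ) : M :=
  ((List.range (hi + 1 - lo)).map fun t => S (hi - t)).prod

lemma descProd_empty {M : Type*} [Monoid M] (S : ℕ → M) {hi lo : ℕ} (h : hi < lo) :
    descProd S hi lo = 1 := by
  unfold descProd
  have : hi + 1 - lo = 0 := by omega
  simp [this]

lemma descProd_peel {M : Type*} [Monoid M] (S : ℕ → M) {hi lo : ℕ} (h1 : 1 ≤ lo)
    (h : lo ≤ hi) : descProd S hi lo = S hi * descProd S (hi - 1) lo := by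
  unfold descProd
  have e1 : hi + 1 - lo = (hi - lo) + 1 := by omega
  have e2 : hi - 1 + 1 - lo = hi - lo := by omega
  rw [e1, e2, List.range_succ_eq_map, List.map_cons, List.prod_cons, List.map_map]
  simp only [Nat.sub_zero]
  have hf : ((fun t => S (hi - t)) ∘ Nat.succ) = fun t => S (hi - 1 - t) := by
    funext t
    simp only [Function.comp_apply]
    congr 1
    omega
  rw [hf]

lemma descProd_single {M : Type*} [Monoid M] (S : ℕ → M) (h : ℕ) :
    descProd S h h = S h := by
  unfold descProd
  simp [List.range_succ]

section
variable {M : Type*} [Monoid M] {m : ℕ} {S : ℕ → M}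
  (hcomm : ∀ a b : ℕ, 1 ≤ a → a ≤ m - 1 → 1 ≤ b → b ≤ m - 1 →
      (a + 1 < b ∨ b + 1 < a) → S a * S b = S b * S a)
  (hbraid : ∀ a : ℕ, 1 ≤ a → a + 1 ≤ m - 1 →
      S a * S (a + 1) * S a = S (a + 1) * S a * S (a + 1))

include hcomm in
lemma commute_descProd (u : ℕ) (hu1 : 1 ≤ u) (hu2 : u ≤ m - 1) :
    ∀ h lo : ℕ, 1 ≤ lo → h ≤ m - 1 → h + 1 < u →
      S u * descProd S h lo = descProd S h lo * S u := by
  intro h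
  induction h with
  | zero =>
    intro lo hlo _ _
    rw [descProd_empty S (by omega)]
    simp
  | succ n ih =>
    intro lo hlo hbound hlt
    by_cases hc : n + 1 < lo
    · rw [descProd_empty S hc]; simp
    · push_neg at hc
      rw [descProd_peel S hlo hc]
      have hcom : S u * S (n + 1) = S (n + 1) * S u :=
        hcomm u (n + 1) hu1 hu2 (by omega) hbound (Or.inr (by omega))
      have e : n + 1 - 1 = n := by omega
      rw [e, ← mul_assoc, hcom, mul_assoc, ih lo hlo (by omega) (by omega),
        mul_assoc]

include hcomm hbraid in
lemma shift_descProd (i t : ℕ) (hi : 1 ≤ i) (hit : i ≤ t) :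
    ∀ j : ℕ, t < j → j ≤ m - 1 →
      S t * descProd S j i = descProd S j i * S (t + 1) := by
  have base : t + 1 ≤ m - 1 →
      S t * descProd S (t + 1) i = descProd S (t + 1) i * S (t + 1) := by
    intro hjm
    have e1 : descProd S (t + 1) i = S (t + 1) * descProd S t i := by
      rw [descProd_peel S hi (by omega)]; simp
    have e2 : descProd S t i = S t * descProd S (t - 1) i :=
      descProd_peel S hi hit
    have hcom : S (t + 1) * descProd S (t - 1) i = descProd S (t - 1) i * S (t + 1) :=
      commute_descProd hcomm (t + 1) (by omega) hjm (t - 1) i hi (by omega)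
        (by omega)
    have hb : S t * S (t + 1) * S t = S (t + 1) * S t * S (t + 1) :=
      hbraid t (by omega) hjm
    calc S t * descProd S (t + 1) i
        = (S t * S (t + 1) * S t) * descProd S (t - 1) i := by
          rw [e1, e2]; simp [mul_assoc]
      _ = (S (t + 1) * S t * S (t + 1)) * descProd S (t - 1) i := by rw [hb]
      _ = S (t + 1) * S t * (S (t + 1) * descProd S (t - 1) i) := by
          simp [mul_assoc]
      _ = S (t + 1) * S t * (descProd S (t - 1) i * S (t + 1)) := by rw [hcom]
      _ = descProd S (t + 1) i * S (t + 1) := by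
          rw [e1, e2]; simp [mul_assoc]
  intro j hj
  induction j, hj using Nat.le_induction with
  | base => exact base
  | succ n hn ih =>
    intro hnm
    have e1 : descProd S (n + 1) i = S (n + 1) * descProd S n i := by
      rw [descProd_peel S hi (by omega)]; simp
    rcases Nat.lt_or_ge t n with h | h
    · have hcom : S t * S (n + 1) = S (n + 1) * S t :=
        hcomm t (n + 1) (by omega) (by omega) (by omega) hnm (Or.inl (by omega))
      rw [e1, ← mul_assoc, hcom, mul_assoc, ih (by omega), mul_assoc]
    · have : t = n := by omega
      subst this
      exact base hnm
end

/-- A braid-relation identity among products of generators with strictly decreasing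
indices. -/
theorem stmt5 {M : Type*} [Monoid M] (m : ℕ) (S : ℕ → M)
    (hcomm : ∀ a b : ℕ, 1 ≤ a → a ≤ m - 1 → 1 ≤ b → b ≤ m - 1 →
      (a + 1 < b ∨ b + 1 < a) → S a * S b = S b * S a)
    (hbraid : ∀ a : ℕ, 1 ≤ a → a + 1 ≤ m - 1 →
      S a * S (a + 1) * S a = S (a + 1) * S a * S (a + 1))
    (i k l j : ℕ) (h1 : 1 ≤ i) (h2 : i ≤ k) (h3 : k < l) (h4 : l ≤ j) (h5 : j ≤ m - 1) :
    descProd S (l - 1) k * descProd S j i = descProd S j i * descProd S l (k + 1) := by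
  revert h4
  induction l, h3 using Nat.le_induction with
  | base =>
    intro h4
    have e : k + 1 - 1 = k := by omega
    rw [e, descProd_single, descProd_single,
      shift_descProd hcomm hbraid i k h1 h2 j (by omega) h5]
  | succ n hn ih =>
    intro h4'
    have ihr := ih (by omega)
    have e : n + 1 - 1 = n := by omega
    have ep : descProd S n k = S n * descProd S (n - 1) k :=
      descProd_peel S (by omega) (by omega)
    have ep2 : descProd S (n + 1) (k + 1) = S (n + 1) * descProd S n (k + 1) := by
      rw [descProd_peel S (by omega) (by omega)]; simp
    rw [e, ep, mul_assoc, ihr, ← mul_assoc,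
      shift_descProd hcomm hbraid i n h1 (by omega) j (by omega) h5, mul_assoc, ← ep2]
end

section
/- Let p be a prime, q a power of p, and 0 ≤ r ≤ p−1. Let V be the space of homogeneous polynomials of degree r in two variables X, Y over an algebraic closure 𝔽̄_p of 𝔽_p. Then the subspace of polynomials f ∈ V satisfying f(X, bX + Y) = f(X, Y) for all b ∈ 𝔽_q is exactly the line spanned by X^r. -/
/-! Evaluating the invariance at `(1, 0)` shows that the dehomogenization `t ↦ F(1, t)`, a
polynomial of degree `≤ r < p`, takes the value `F(1, 0)` at the `p` points of `𝔽_p ⊆ 𝔽_q`,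
so it is constant. By homogeneity `F(x, y) = x ^ r F(1, y / x) = F(1, 0) x ^ r` for `x ≠ 0`,
and over the infinite field `𝔽̄_p` a polynomial is determined by its values on the box
`(𝔽̄_p ∖ {0}) × 𝔽̄_p`. -/

namespace MvPolynomial

theorem IsHomogeneous.eval_smul {σ R : Type*} [CommSemiring R] {φ : MvPolynomial σ R} {n : ℕ}
    (hφ : φ.IsHomogeneous n) (c : R) (v : σ → R) :
    eval (c • v) φ = c ^ n * eval v φ := by
  rw [eval_eq, eval_eq, Finset.mul_sum]
  refine Finset.sum_congr rfl fun d hd => ?_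
  have hdeg : ∑ i ∈ d.support, d i = n := by
    rw [← hφ (mem_support_iff.mp hd)]
    simp [Finsupp.weight_apply, Finsupp.sum]
  simp only [Pi.smul_apply, smul_eq_mul, mul_pow, Finset.prod_mul_distrib,
    Finset.prod_pow_eq_pow_sum, hdeg]
  ring

variable {K : Type*} [Field K]

theorem eval_vecCons_one_eq_of_totalDegree_lt_card {F : MvPolynomial (Fin 2) K} {r : ℕ}
    (hF : F.totalDegree ≤ r) {ι : Type*} [Fintype ι] {g : ι → K} (hg : Function.Injective g)
    (hcard : r < Fintype.card ι) {c : K} (h : ∀ i, eval ![1, g i] F = c) (t : K) :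
    eval ![1, t] F = c := by
  set P : Polynomial K := aeval ![1, Polynomial.X] F
  have hP : ∀ t, P.eval t = eval ![1, t] F := fun t => by
    rw [← Polynomial.coe_aeval_eq_eval, comp_aeval_apply, aeval_eq_eval]
    congr 2
    funext i
    fin_cases i <;> simp
  have hPdeg : P.natDegree ≤ r := by
    simpa using aeval_natDegree_le F hF ![1, Polynomial.X] (n := 1) fun i => by
      fin_cases i <;> simp
  have hPc : P = Polynomial.C c :=
    Polynomial.eq_of_natDegree_lt_card_of_eval_eq P _ hg (fun i => by simp [hP, h])
      (by simpa using hPdeg.trans_lt hcard)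
  rw [← hP, hPc, Polynomial.eval_C]

theorem eq_C_mul_X_pow_of_eval_vecCons_one_eq [Infinite K] {F : MvPolynomial (Fin 2) K} {r : ℕ}
    (hF : F.IsHomogeneous r) {c : K} (h : ∀ t, eval ![1, t] F = c) :
    F = C c * X 0 ^ r := by
  refine funext_set ![{0}ᶜ, Set.univ] (fun i => ?_) fun v hv => ?_
  · fin_cases i
    exacts [(Set.finite_singleton 0).infinite_compl, Set.infinite_univ]
  have hv0 : v 0 ≠ 0 := hv 0 trivial
  have hv_smul : v = v 0 • ![1, v 1 / v 0] := by
    funext i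
    fin_cases i <;> simp [mul_div_cancel₀ _ hv0]
  rw [hv_smul, hF.eval_smul, h]
  simp [mul_comm]

theorem eval_bind₁_shear (b : K) (v : Fin 2 → K) (F : MvPolynomial (Fin 2) K) :
    eval v (bind₁ (fun i : Fin 2 => if i = 0 then X 0 else C b * X 0 + X 1) F) =
      eval ![v 0, b * v 0 + v 1] F := by
  rw [eval, eval₂Hom_bind₁]
  congr 2
  funext i
  fin_cases i <;> simp

end MvPolynomial

open MvPolynomial

theorem stmt16_general (p : ℕ) [Fact p.Prime] (f : ℕ) (q : ℕ) (hq : q = p ^ f)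
    (r : ℕ) (hr : r ≤ p - 1)
    (F : MvPolynomial (Fin 2) (AlgebraicClosure (ZMod p)))
    (hF : F.IsHomogeneous r) :
    (∀ b : AlgebraicClosure (ZMod p), b ^ q = b →
        MvPolynomial.bind₁
          (fun i : Fin 2 => if i = 0 then MvPolynomial.X 0
            else MvPolynomial.C b * MvPolynomial.X 0 + MvPolynomial.X 1) F = F) ↔
      ∃ c : AlgebraicClosure (ZMod p),
        F = MvPolynomial.C c * MvPolynomial.X 0 ^ r := by
  set emb := algebraMap (ZMod p) (AlgebraicClosure (ZMod p))
  constructor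
  · intro h
    have hemb_fixed (a : ZMod p) : emb a ^ q = emb a := by rw [hq, ← map_pow, ZMod.pow_card_pow]
    have hr_lt : r < Fintype.card (ZMod p) := by
      have := (Fact.out : p.Prime).pos
      rw [ZMod.card]
      omega
    refine ⟨eval ![1, 0] F, eq_C_mul_X_pow_of_eval_vecCons_one_eq hF
      (eval_vecCons_one_eq_of_totalDegree_lt_card hF.totalDegree_le emb.injective hr_lt fun a => ?_)⟩
    simpa [eval_bind₁_shear] using congrArg (eval ![1, 0]) (h _ (hemb_fixed a))
  · rintro ⟨c, rfl⟩ b -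
    simp

/-- For `0 ≤ r ≤ p - 1`, the homogeneous polynomials of degree `r` in `X, Y` over
`𝔽̄_p` invariant under all substitutions `Y ↦ bX + Y` with `b ∈ 𝔽_q` form exactly the
line spanned by `X^r`. -/
theorem stmt16 (p : ℕ) [Fact p.Prime] (f : ℕ) (hf : 0 < f) (q : ℕ) (hq : q = p ^ f)
    (r : ℕ) (hr : r ≤ p - 1)
    (F : MvPolynomial (Fin 2) (AlgebraicClosure (ZMod p)))
    (hF : F.IsHomogeneous r) :
    (∀ b : AlgebraicClosure (ZMod p), b ^ q = b →
        MvPolynomial.bind₁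
          (fun i : Fin 2 => if i = 0 then MvPolynomial.X 0
            else MvPolynomial.C b * MvPolynomial.X 0 + MvPolynomial.X 1) F = F) ↔
      ∃ c : AlgebraicClosure (ZMod p),
        F = MvPolynomial.C c * MvPolynomial.X 0 ^ r :=
  stmt16_general p f q hq r hr F hF
end
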